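/- Let k > 0 and μ ∈ (0,1). The PGN(μ,k) distribution is symmetric about 0 — i.e. the pushforward of PGN(μ,k) under x ↦ −x equals PGN(μ,k) — if and only if μ = 1/2. -/

import Mathlib

open MeasureTheory Real Set

/-- Density of the chi-squared distribution with `k` degrees of freedom. -/
noncomputable def chiSqDensity (k : ℝ) (v : ℝ) : ℝ :=
  if 0 < v then v ^ (k / 2 - 1) * Real.exp (-v / 2) / ((2 : ℝ) ^ (k / 2) * Real.Gamma (k / 2))
  else 0

/-- The Beta function `B(a,b) = Γ(a)Γ(b)/Γ(a+b)`. -/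
noncomputable def realBeta (a b : ℝ) : ℝ := Real.Gamma a * Real.Gamma b / Real.Gamma (a + b)

/-- Density of the Beta(2μ, 2(1-μ)) distribution. -/
noncomputable def betaDensity (μ : ℝ) (u : ℝ) : ℝ :=
  if 0 < u ∧ u < 1 then
    u ^ (2 * μ - 1) * (1 - u) ^ (1 - 2 * μ) / realBeta (2 * μ) (2 * (1 - μ))
  else 0

/-- The chi-squared distribution with `k` degrees of freedom, as a measure on ℝ. -/
noncomputable def chiSqMeasure (k : ℝ) : Measure ℝ :=
  volume.withDensity (fun v => ENNReal.ofReal (chiSqDensity k v))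

/-- The Beta(2μ, 2(1-μ)) distribution, as a measure on ℝ. -/
noncomputable def betaMeasure (μ : ℝ) : Measure ℝ :=
  volume.withDensity (fun u => ENNReal.ofReal (betaDensity μ u))

/-- The polar-generalized normal distribution PGN(μ, k): the pushforward of
(chi-squared k) ⊗ (Beta(2μ, 2(1-μ))) under `(v, u) ↦ √v · cos (π u)`. -/
noncomputable def PGN (μ k : ℝ) : Measure ℝ :=
  Measure.map (fun p : ℝ × ℝ => Real.sqrt p.1 * Real.cos (π * p.2))
    ((chiSqMeasure k).prod (betaMeasure μ))

/-! Reflecting `u ↦ 1 - u` exchanges Beta(2μ, 2(1 - μ)) with Beta(2(1 - μ), 2μ) and turns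
`cos (π u)` into `-cos (π u)`, so negation maps PGN(μ, k) to PGN(1 - μ, k). Since the chi-squared
factor is a probability measure on `v > 0`, PGN(μ, k) gives `(0, ∞)` the Beta(2μ, 2(1 - μ)) mass
of `(0, 1/2)`. For `μ > 1/2` the Beta density at `u < 1/2` is strictly smaller than at `1 - u`,
so the masses of `(0, ∞)` under PGN(μ, k) and PGN(1 - μ, k) differ unless `μ = 1/2`. -/

open scoped ENNReal

instance (k : ℝ) : SFinite (chiSqMeasure k) := by
  unfold chiSqMeasure; infer_instance

instance (μ : ℝ) : SFinite (betaMeasure μ) := by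
  unfold betaMeasure; infer_instance

lemma MeasureTheory.MeasurePreserving.map_withDensity_comp {α β : Type*} [MeasurableSpace α]
    [MeasurableSpace β] {μ : Measure α} {ν : Measure β} {f : α → β}
    (hf : MeasurePreserving f μ ν) (he : MeasurableEmbedding f) (g : β → ℝ≥0∞) :
    (μ.withDensity (g ∘ f)).map f = ν.withDensity g := by
  ext s hs
  rw [Measure.map_apply hf.measurable hs, withDensity_apply _ (hf.measurable hs),
    withDensity_apply _ hs]
  exact hf.setLIntegral_comp_preimage_emb he g s

lemma MeasureTheory.withDensity_ofReal_compl_eq_zero {α : Type*} [MeasurableSpace α]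
    (μ : Measure α) {f : α → ℝ} {s : Set α} (hs : MeasurableSet s) (hf : ∀ x ∉ s, f x = 0) :
    μ.withDensity (fun x => ENNReal.ofReal (f x)) sᶜ = 0 := by
  rw [withDensity_apply _ hs.compl]
  exact setLIntegral_eq_zero hs.compl fun x hx => by simp [hf x hx]

lemma chiSqMeasure_eq_gammaMeasure (k : ℝ) :
    chiSqMeasure k = ProbabilityTheory.gammaMeasure (k / 2) (1 / 2) := by
  refine withDensity_congr_ae ?_
  filter_upwards [Measure.ae_ne volume 0] with v hv
  rw [ProbabilityTheory.gammaPDF, ProbabilityTheory.gammaPDFReal, chiSqDensity]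
  rcases hv.lt_or_gt with hv | hv
  · rw [if_neg hv.not_gt, if_neg hv.not_ge]
  · rw [if_pos hv, if_pos hv.le, Real.div_rpow zero_le_one zero_le_two, Real.one_rpow]
    congr 1
    field_simp

lemma chiSqMeasure_Ioi {k : ℝ} (hk : 0 < k) : chiSqMeasure k (Ioi 0) = 1 := by
  have : IsProbabilityMeasure (chiSqMeasure k) := by
    rw [chiSqMeasure_eq_gammaMeasure]
    exact ProbabilityTheory.isProbabilityMeasure_gammaMeasure (by positivity) (by norm_num)
  refine (prob_compl_eq_zero_iff measurableSet_Ioi).1 ?_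
  exact withDensity_ofReal_compl_eq_zero _ measurableSet_Ioi fun v hv => if_neg hv

lemma betaDensity_eq_betaPDFReal (μ u : ℝ) :
    betaDensity μ u = ProbabilityTheory.betaPDFReal (2 * μ) (2 * (1 - μ)) u := by
  rw [betaDensity, ProbabilityTheory.betaPDFReal, realBeta, ProbabilityTheory.beta]
  split_ifs
  · ring_nf
  · rfl

lemma betaMeasure_eq (μ : ℝ) :
    betaMeasure μ = ProbabilityTheory.betaMeasure (2 * μ) (2 * (1 - μ)) := by
  simp only [betaMeasure, betaDensity_eq_betaPDFReal]
  rfl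

lemma isProbabilityMeasure_betaMeasure {μ : ℝ} (h₀ : 0 < μ) (h₁ : μ < 1) :
    IsProbabilityMeasure (betaMeasure μ) := by
  rw [betaMeasure_eq]
  exact ProbabilityTheory.isProbabilityMeasureBeta (by linarith) (by linarith)

lemma betaMeasure_compl_Ioo (μ : ℝ) : betaMeasure μ (Ioo 0 1)ᶜ = 0 :=
  withDensity_ofReal_compl_eq_zero _ measurableSet_Ioo fun _ hu => if_neg hu

lemma realBeta_comm (a b : ℝ) : realBeta a b = realBeta b a := by
  rw [realBeta, realBeta, mul_comm, add_comm]

@[fun_prop]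
lemma measurable_betaDensity (μ : ℝ) : Measurable (betaDensity μ) :=
  Measurable.ite measurableSet_Ioo (by fun_prop) (by fun_prop)

lemma betaDensity_one_sub (μ u : ℝ) : betaDensity (1 - μ) (1 - u) = betaDensity μ u := by
  simp only [betaDensity, sub_sub_cancel, sub_pos, sub_lt_self_iff, and_comm,
    realBeta_comm (2 * (1 - μ))]
  ring_nf

lemma map_one_sub_betaMeasure (μ : ℝ) :
    (betaMeasure μ).map (fun u => 1 - u) = betaMeasure (1 - μ) := by
  have hpres : MeasurePreserving (fun u : ℝ => 1 - u) volume volume := by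
    simpa [Function.comp_def, sub_eq_add_neg] using
      (measurePreserving_add_left volume (1 : ℝ)).comp (Measure.measurePreserving_neg volume)
  have hemb : MeasurableEmbedding (fun u : ℝ => 1 - u) :=
    (MeasurableEquiv.subLeft (1 : ℝ)).measurableEmbedding
  simpa [betaMeasure, Function.comp_def, betaDensity_one_sub] using
    hpres.map_withDensity_comp hemb fun u => ENNReal.ofReal (betaDensity (1 - μ) u)

lemma betaDensity_lt_betaDensity_one_sub {μ u : ℝ} (hμ : 1 / 2 < μ) (hμ₁ : μ < 1) (hu₀ : 0 < u)
    (hu : u < 1 / 2) : betaDensity μ u < betaDensity μ (1 - u) := by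
  have hB : 0 < realBeta (2 * μ) (2 * (1 - μ)) :=
    ProbabilityTheory.beta_pos (by linarith) (by linarith)
  have hsym : 1 - 2 * μ = -(2 * μ - 1) := by ring
  rw [betaDensity, betaDensity, if_pos ⟨hu₀, by linarith⟩, if_pos ⟨by linarith, by linarith⟩,
    sub_sub_cancel, hsym]
  gcongr ?_ / _
  have hu₁ : u < 1 - u := by linarith
  exact mul_lt_mul'' (Real.rpow_lt_rpow hu₀.le hu₁ (by linarith))
    (Real.rpow_lt_rpow_of_neg hu₀ hu₁ (by linarith)) (Real.rpow_nonneg hu₀.le _)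
    (Real.rpow_nonneg (by linarith) _)

lemma betaMeasure_Ioo_zero_half_lt {μ : ℝ} (hμ : 1 / 2 < μ) (hμ₁ : μ < 1) :
    betaMeasure μ (Ioo 0 (1 / 2)) < betaMeasure (1 - μ) (Ioo 0 (1 / 2)) := by
  have := isProbabilityMeasure_betaMeasure (by linarith) hμ₁
  have hfin := measure_ne_top (betaMeasure μ) (Ioo 0 (1 / 2))
  simp only [betaMeasure, withDensity_apply _ measurableSet_Ioo] at hfin ⊢
  refine setLIntegral_strict_mono measurableSet_Ioo (by simp) (by fun_prop) hfin
    (ae_of_all _ fun u hu => ?_)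
  obtain ⟨hu₀, hu⟩ := hu
  have hlt := betaDensity_lt_betaDensity_one_sub hμ hμ₁ hu₀ hu
  have hpos : 0 < betaDensity μ (1 - u) := by
    rw [betaDensity_eq_betaPDFReal]
    exact ProbabilityTheory.betaPDFReal_pos (by linarith) (by linarith) (by linarith) (by linarith)
  rw [← betaDensity_one_sub μ (1 - u), sub_sub_cancel] at hlt hpos
  exact (ENNReal.ofReal_lt_ofReal_iff hpos).2 hlt

lemma measurable_sqrt_mul_cos : Measurable fun p : ℝ × ℝ => √p.1 * cos (π * p.2) := by
  fun_prop

lemma map_neg_PGN (μ k : ℝ) : (PGN μ k).map (fun x => -x) = PGN (1 - μ) k := by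
  have hreflect : (fun x : ℝ => -x) ∘ (fun p : ℝ × ℝ => √p.1 * cos (π * p.2)) =
      (fun p : ℝ × ℝ => √p.1 * cos (π * p.2)) ∘ Prod.map id (fun u => 1 - u) := by
    ext ⟨v, u⟩
    simp [mul_sub, cos_pi_sub]
  have hsub : Measurable fun u : ℝ => 1 - u := by fun_prop
  rw [PGN, PGN, Measure.map_map measurable_neg measurable_sqrt_mul_cos, hreflect,
    ← Measure.map_map measurable_sqrt_mul_cos (measurable_id.prodMap hsub),
    ← Measure.map_prod_map _ _ measurable_id hsub, Measure.map_id, map_one_sub_betaMeasure]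

lemma sqrt_mul_cos_preimage_Ioi :
    (fun p : ℝ × ℝ => √p.1 * cos (π * p.2)) ⁻¹' Ioi 0 = Ioi 0 ×ˢ {u | 0 < cos (π * u)} := by
  ext ⟨v, u⟩
  simp only [mem_preimage, mem_Ioi, mem_prod, mem_ofPred_eq]
  constructor
  · intro h
    have hu := pos_of_mul_pos_right h (sqrt_nonneg v)
    exact ⟨sqrt_pos.1 (pos_of_mul_pos_left h hu.le), hu⟩
  · rintro ⟨hv, hu⟩
    exact mul_pos (sqrt_pos.2 hv) hu

lemma cos_pi_mul_pos_inter_Ioo :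
    {u : ℝ | 0 < cos (π * u)} ∩ Ioo 0 1 = Ioo 0 (1 / 2) := by
  ext u
  simp only [mem_inter_iff, mem_ofPred_eq, mem_Ioo]
  constructor
  · rintro ⟨hcos, hu₀, hu₁⟩
    refine ⟨hu₀, ?_⟩
    by_contra! hu
    exact hcos.not_ge
      (cos_nonpos_of_pi_div_two_le_of_le (by nlinarith [pi_pos]) (by nlinarith [pi_pos]))
  · rintro ⟨hu₀, hu⟩
    exact ⟨cos_pos_of_mem_Ioo ⟨by nlinarith [pi_pos], by nlinarith [pi_pos]⟩, hu₀, by linarith⟩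

lemma PGN_Ioi {μ k : ℝ} (hk : 0 < k) : PGN μ k (Ioi 0) = betaMeasure μ (Ioo 0 (1 / 2)) := by
  rw [PGN, Measure.map_apply measurable_sqrt_mul_cos measurableSet_Ioi, sqrt_mul_cos_preimage_Ioi,
    Measure.prod_prod, chiSqMeasure_Ioi hk, one_mul, ← cos_pi_mul_pos_inter_Ioo,
    measure_inter_conull (betaMeasure_compl_Ioo μ)]

theorem stmt12 (k μ : ℝ) (hk : 0 < k) (hμ : μ ∈ Set.Ioo (0:ℝ) 1) :
    Measure.map (fun x : ℝ => -x) (PGN μ k) = PGN μ k ↔ μ = 1/2 := by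
  refine ⟨fun hsymm => ?_, fun hhalf => by rw [map_neg_PGN, hhalf]; norm_num⟩
  have hIoi : betaMeasure μ (Ioo 0 (1 / 2)) = betaMeasure (1 - μ) (Ioo 0 (1 / 2)) := by
    rw [← PGN_Ioi hk, ← PGN_Ioi hk, ← map_neg_PGN, hsymm]
  by_contra hne
  rcases lt_or_gt_of_ne hne with hlt | hgt
  · have := betaMeasure_Ioo_zero_half_lt (μ := 1 - μ) (by linarith) (by linarith [hμ.1])
    rw [sub_sub_cancel] at this
    exact this.ne' hIoi
  · exact (betaMeasure_Ioo_zero_half_lt hgt hμ.2).ne hIoi
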